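/- Let d ≥ 1, κ ≥ 2d, and let α : ℝ^{2d} → ℂ be measurable with ‖α‖_{A^{κ,2}} < ∞ (the norm taken on ℝ^{2d}). Then for every x ∈ ℝ^d the density ρ(x) := ∫_{ℝ^d} |α(x,v)|² dv satisfies ρ(x) ≤ A(κ,d) ‖α‖_{A^{κ,2}}², where A(κ,d) := inf_{R>0} (1+R)^κ/(ω_d R^d) and ω_d is the Lebesgue volume of the unit ball in ℝ^d. -/

import Mathlib

open MeasureTheory
open scoped ENNReal NNReal

/-- `ℝ^d` as a Euclidean space. -/
abbrev E (d : ℕ) : Type := EuclideanSpace ℝ (Fin d)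

/-- The `A^{κ,p}` norm: `sup_{R ≥ 0} (1+R)^{-κ/p} (∫ sup_{|z̄| ≤ R} ‖f(z+z̄)‖^p dz)^{1/p}`. -/
noncomputable def Anorm {G F : Type*} [NormedAddCommGroup G] [MeasureSpace G]
    [NormedAddCommGroup F] (κ p : ℝ) (f : G → F) : ℝ≥0∞ :=
  ⨆ R : NNReal, (ENNReal.ofReal (1 + (R : ℝ))) ^ (-(κ / p)) *
    (∫⁻ z, ⨆ w ∈ Metric.closedBall (0 : G) (R : ℝ),
      ENNReal.ofReal (‖f (z + w)‖ ^ p)) ^ (1 / p)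

/-- The constant `A(a,d) = inf_{R>0} (1+R)^a / (ω_d R^d)`, where `ω_d` is the Lebesgue
volume of the unit ball in `ℝ^d`. -/
noncomputable def Aconst (d : ℕ) (a : ℝ) : ℝ :=
  ⨅ R : {R : ℝ // 0 < R},
    (1 + R.1) ^ a / ((volume (Metric.ball (0 : E d) 1)).toReal * R.1 ^ (d : ℝ))

/-! Translating `z = (y, v)` by `w = (x - y, 0)`, which has norm at most `R` when
`y ∈ B_R(x)`, shows that the integrand of the `A^{κ,2}` norm at radius `R` dominates
`|α(x, v)|²` on the slab `B_R(x) × ℝ^d`. Hence `ω_d R^d ρ(x) ≤ (1 + R)^κ ‖α‖²` for every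
`R > 0`; optimise over `R`. -/

open Metric

theorem lintegral_iSup_closedBall_le_Anorm {G F : Type*} [NormedAddCommGroup G] [MeasureSpace G]
    [NormedAddCommGroup F] (κ : ℝ) {p : ℝ} (hp : 0 < p) (f : G → F) (R : ℝ≥0) :
    ∫⁻ z, ⨆ w ∈ closedBall (0 : G) R, ENNReal.ofReal (‖f (z + w)‖ ^ p) ≤
      ENNReal.ofReal ((1 + R) ^ κ) * Anorm κ p f ^ p := by
  set I := ∫⁻ z, ⨆ w ∈ closedBall (0 : G) R, ENNReal.ofReal (‖f (z + w)‖ ^ p)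
  set b := ENNReal.ofReal (1 + R)
  have hb0 : b ≠ 0 := by simp only [b, ne_eq, ENNReal.ofReal_eq_zero, not_le]; positivity
  have hbt : b ≠ ⊤ := ENNReal.ofReal_ne_top
  have hterm : b ^ (-(κ / p)) * I ^ (1 / p) ≤ Anorm κ p f := le_iSup_of_le R le_rfl
  rw [ENNReal.rpow_neg, ENNReal.inv_mul_le_iff (by simp [hb0, hbt]) (by simp [hb0, hbt])]
    at hterm
  calc I = (I ^ (1 / p)) ^ p := by
        rw [← ENNReal.rpow_mul, one_div_mul_cancel hp.ne', ENNReal.rpow_one]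
    _ ≤ (b ^ (κ / p) * Anorm κ p f) ^ p := by gcongr
    _ = ENNReal.ofReal ((1 + R) ^ κ) * Anorm κ p f ^ p := by
      rw [ENNReal.mul_rpow_of_nonneg _ _ hp.le, ← ENNReal.rpow_mul, div_mul_cancel₀ _ hp.ne',
        ENNReal.ofReal_rpow_of_pos (by positivity)]

theorem le_iSup_closedBall_add_of_dist_le {G H : Type*} [SeminormedAddCommGroup G]
    [SeminormedAddCommGroup H] (φ : G × H → ℝ≥0∞) {x : G} {R : ℝ} (hR : 0 ≤ R) {z : G × H}
    (hz : dist z.1 x ≤ R) : φ (x, z.2) ≤ ⨆ w ∈ closedBall (0 : G × H) R, φ (z + w) := by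
  have hw : ((x - z.1, 0) : G × H) ∈ closedBall 0 R := by
    rw [mem_closedBall, dist_zero_right, Prod.norm_def, norm_zero, norm_sub_rev, ← dist_eq_norm]
    exact max_le hz hR
  have hzw : z + (x - z.1, 0) = (x, z.2) := by ext <;> simp
  simpa only [hzw] using le_biSup (fun w => φ (z + w)) hw

theorem volume_closedBall_mul_lintegral_le {G H : Type*} [SeminormedAddCommGroup G]
    [MeasureSpace G] [OpensMeasurableSpace G] [SeminormedAddCommGroup H] [MeasureSpace H]
    [SFinite (volume : Measure H)] (φ : G × H → ℝ≥0∞) (x : G) {R : ℝ} (hR : 0 ≤ R)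
    (hφ : Measurable fun v => φ (x, v)) :
    volume (closedBall x R) * ∫⁻ v, φ (x, v) ≤
      ∫⁻ z, ⨆ w ∈ closedBall (0 : G × H) R, φ (z + w) := by
  have hball : MeasurableSet (closedBall x R) := isClosed_closedBall.measurableSet
  calc volume (closedBall x R) * ∫⁻ v, φ (x, v)
      = ∫⁻ z : G × H, (closedBall x R).indicator (fun _ => 1) z.1 * φ (x, z.2) := by
        rw [Measure.volume_eq_prod, lintegral_prod_mul (aemeasurable_one.indicator hball)
          hφ.aemeasurable, lintegral_indicator_const hball, one_mul]
    _ ≤ ∫⁻ z, ⨆ w ∈ closedBall (0 : G × H) R, φ (z + w) := by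
      refine lintegral_mono fun z => ?_
      by_cases hz : z.1 ∈ closedBall x R
      · rw [Set.indicator_of_mem hz, one_mul]
        exact le_iSup_closedBall_add_of_dist_le φ hR hz
      · rw [Set.indicator_of_notMem hz, zero_mul]
        exact bot_le

theorem statement10 (d : ℕ) (κ : ℝ)
    (α : E d × E d → ℂ) (hα : Measurable α) (hfin : Anorm κ 2 α < ⊤) (x : E d) :
    (∫⁻ v : E d, ENNReal.ofReal (‖α (x, v)‖ ^ 2)) ≤
      ENNReal.ofReal (Aconst d κ) * Anorm κ 2 α ^ 2 := by
  set ω := (volume (ball (0 : E d) 1)).toReal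
  have hω : 0 < ω := ENNReal.toReal_pos (measure_ball_pos volume 0 one_pos).ne'
    measure_ball_lt_top.ne
  have key : ∀ R : {R : ℝ // 0 < R}, ∫⁻ v, ENNReal.ofReal (‖α (x, v)‖ ^ 2) ≤
      ENNReal.ofReal ((1 + R.1) ^ κ / (ω * R.1 ^ (d : ℝ))) * Anorm κ 2 α ^ 2 := by
    rintro ⟨R, hR⟩
    have hvol : volume (closedBall x R) = ENNReal.ofReal (ω * R ^ (d : ℝ)) := by
      rw [Measure.addHaar_closedBall volume x hR.le, finrank_euclideanSpace_fin,
        ENNReal.ofReal_mul hω.le, ENNReal.ofReal_toReal measure_ball_lt_top.ne,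
        Real.rpow_natCast, mul_comm]
    have hlow := volume_closedBall_mul_lintegral_le
      (fun z => ENNReal.ofReal (‖α z‖ ^ (2 : ℝ))) x hR.le (by fun_prop)
    have hup := lintegral_iSup_closedBall_le_Anorm κ two_pos α ⟨R, hR.le⟩
    have hc : 0 < ω * R ^ (d : ℝ) := by positivity
    simp only [Real.rpow_two, ENNReal.rpow_two] at hlow hup
    rw [ENNReal.ofReal_div_of_pos hc, div_eq_mul_inv, mul_right_comm, ← div_eq_mul_inv,
      ENNReal.le_div_iff_mul_le (.inl (ENNReal.ofReal_pos.2 hc).ne')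
      (.inl ENNReal.ofReal_ne_top), mul_comm, ← hvol]
    exact hlow.trans hup
  have : Nonempty {R : ℝ // 0 < R} := ⟨⟨1, one_pos⟩⟩
  rw [Aconst, ENNReal.ofReal_iInf,
    ENNReal.iInf_mul fun h => absurd h (ENNReal.pow_ne_top hfin.ne)]
  exact le_iInf key
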